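/- For even n ≥ 4, the 2×n grid graph L_{2,n} satisfies DL(L_{2,n}) = n/2 = r(L_{2,n}) − 1. -/

import Mathlib

/-- `G` admits a `k`-dispersed labelling. -/
def HasDispersedLabelling {V : Type*} [Fintype V] (G : SimpleGraph V) (k : ℕ) : Prop :=
  ∃ φ : Fin (Fintype.card V) ≃ V,
    ∀ i j : Fin (Fintype.card V), (j : ℕ) = (i : ℕ) + 1 → k ≤ G.dist (φ i) (φ j)

/-- `DL G`: the maximum `k` such that `G` admits a `k`-dispersed labelling. -/
noncomputable def DL {V : Type*} [Fintype V] (G : SimpleGraph V) : ℕ :=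
  sSup {k | HasDispersedLabelling G k}

/-- The eccentricity of a vertex: the maximum distance to another vertex. -/
noncomputable def eccent {V : Type*} [Fintype V] (G : SimpleGraph V) (v : V) : ℕ :=
  Finset.univ.sup (fun u => G.dist v u)

/-- The radius of a graph: the minimum eccentricity of a vertex. -/
noncomputable def graphRadius {V : Type*} [Fintype V] (G : SimpleGraph V) : ℕ :=
  sInf (Set.range (eccent G))

/-- The `m × n` grid graph, as the box product of two path graphs. -/
def gridGraph (m n : ℕ) : SimpleGraph (Fin m × Fin n) :=
  SimpleGraph.boxProd (SimpleGraph.pathGraph m) (SimpleGraph.pathGraph n)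

/-!
Pairing every column `q < m` with column `q + m` gives a zigzag labelling of the `2 × 2m` grid
in which consecutive labels are at distance at least `m`. Conversely, each of the central vertices
`(a, m - 1)` and `(a, m)` has exactly one vertex at distance `m + 1`, its antipode. In an
`(m + 1)`-dispersed labelling such a vertex would need two distinct far neighbours unless it
carries the first or the last label, and there are not enough end labels for three of them.
The radius is `m + 1`, attained at the central vertices.
-/

section Eccentricity

variable {V : Type*} [Fintype V] {G : SimpleGraph V}

lemma dist_le_eccent (v u : V) : G.dist v u ≤ eccent G v :=
  Finset.le_sup (f := fun u => G.dist v u) (Finset.mem_univ u)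

lemma eccent_le {v : V} {r : ℕ} (h : ∀ u, G.dist v u ≤ r) : eccent G v ≤ r :=
  Finset.sup_le fun u _ => h u

lemma graphRadius_eq {r : ℕ} (v₀ : V) (h : ∀ v, r ≤ eccent G v) (h₀ : eccent G v₀ ≤ r) :
    graphRadius G = r := by
  unfold graphRadius
  exact le_antisymm ((Nat.sInf_le (Set.mem_range_self v₀)).trans h₀)
    (le_csInf (Set.range_nonempty_iff_nonempty.mpr ⟨v₀⟩) (Set.forall_mem_range.mpr h))

end Eccentricity

section DispersedLabelling

variable {V : Type*} [Fintype V] {G : SimpleGraph V} {k : ℕ}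

lemma HasDispersedLabelling.mono {l : ℕ} (h : HasDispersedLabelling G l) (hkl : k ≤ l) :
    HasDispersedLabelling G k :=
  let ⟨φ, hφ⟩ := h
  ⟨φ, fun i j hij => hkl.trans (hφ i j hij)⟩

lemma hasDispersedLabelling_of_injective (f : Fin (Fintype.card V) → V)
    (hf : Function.Injective f) (h : ∀ i j : Fin (Fintype.card V), (j : ℕ) = i + 1 →
      k ≤ G.dist (f i) (f j)) : HasDispersedLabelling G k :=
  ⟨Equiv.ofBijective f ((Fintype.bijective_iff_injective_and_card f).mpr ⟨hf, by simp⟩), h⟩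

lemma DL_eq_of_hasDispersedLabelling (h : HasDispersedLabelling G k)
    (h' : ¬ HasDispersedLabelling G (k + 1)) : DL G = k := by
  have hbdd : ∀ l ∈ {l | HasDispersedLabelling G l}, l ≤ k := fun l hl =>
    not_lt.mp fun hlt => h' (HasDispersedLabelling.mono hl hlt)
  exact le_antisymm (csSup_le ⟨k, h⟩ hbdd) (le_csSup ⟨k, hbdd⟩ h)

/-- An interior label has two distinct neighbours in the labelling, both at distance `≥ k`. -/
lemma label_eq_zero_or_last {φ : Fin (Fintype.card V) ≃ V}
    (hφ : ∀ i j : Fin (Fintype.card V), (j : ℕ) = i + 1 → k ≤ G.dist (φ i) (φ j)) {v : V}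
    (hv : {w | k ≤ G.dist v w}.Subsingleton) :
    (φ.symm v : ℕ) = 0 ∨ (φ.symm v : ℕ) + 1 = Fintype.card V := by
  by_contra! hend
  set i := φ.symm v
  let p : Fin (Fintype.card V) := ⟨i - 1, by omega⟩
  let q : Fin (Fintype.card V) := ⟨i + 1, by omega⟩
  have hvi : φ i = v := φ.apply_symm_apply v
  have hp : k ≤ G.dist v (φ p) := by
    rw [SimpleGraph.dist_comm, ← hvi]; exact hφ p i (by simp only [p]; omega)
  have hq : k ≤ G.dist v (φ q) := by
    rw [← hvi]; exact hφ i q rfl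
  have hpq : p = q := φ.injective (hv hp hq)
  simp only [p, q, Fin.mk.injEq] at hpq
  omega

theorem not_hasDispersedLabelling_of_three {u v w : V} (huv : u ≠ v) (huw : u ≠ w) (hvw : v ≠ w)
    (hu : {x | k ≤ G.dist u x}.Subsingleton) (hv : {x | k ≤ G.dist v x}.Subsingleton)
    (hw : {x | k ≤ G.dist w x}.Subsingleton) : ¬ HasDispersedLabelling G k := by
  rintro ⟨φ, hφ⟩
  have huv' := Fin.val_injective.ne (φ.symm.injective.ne huv)
  have huw' := Fin.val_injective.ne (φ.symm.injective.ne huw)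
  have hvw' := Fin.val_injective.ne (φ.symm.injective.ne hvw)
  have := label_eq_zero_or_last hφ hu
  have := label_eq_zero_or_last hφ hv
  have := label_eq_zero_or_last hφ hw
  omega

end DispersedLabelling

namespace SimpleGraph

lemma dist_boxProd {α β : Type*} {G : SimpleGraph α} {H : SimpleGraph β}
    (hG : G.Preconnected) (hH : H.Preconnected) (x y : α × β) :
    (G □ H).dist x y = G.dist x.1 y.1 + H.dist x.2 y.2 := by
  rw [dist, edist_boxProd, ENat.toNat_add (edist_ne_top_iff_reachable.mpr (hG _ _))
    (edist_ne_top_iff_reachable.mpr (hH _ _))]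
  rfl

lemma Walk.natDist_le_length_pathGraph {n : ℕ} {i j : Fin n} (w : (pathGraph n).Walk i j) :
    Nat.dist i j ≤ w.length := by
  induction w with
  | nil => simp
  | @cons a b c hadj w ih =>
    rw [pathGraph_adj] at hadj
    have := Nat.dist.triangle_inequality (a : ℕ) b c
    simp only [Walk.length_cons, Nat.dist] at *
    omega

lemma pathGraph_dist {n : ℕ} (i j : Fin n) : (pathGraph n).dist i j = Nat.dist i j := by
  have hup : ∀ (d : ℕ) (i j : Fin n), (j : ℕ) = i + d → (pathGraph n).dist i j ≤ d := by
    intro d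
    induction d with
    | zero => intro i j h; simp [Fin.ext (by omega : (i : ℕ) = j)]
    | succ d ih =>
      intro i j h
      let j' : Fin n := ⟨i + d, by omega⟩
      have hadj : (pathGraph n).Adj j' j := pathGraph_adj.mpr (Or.inl (by simp [j']; omega))
      calc (pathGraph n).dist i j ≤ (pathGraph n).dist i j' + (pathGraph n).dist j' j :=
            hadj.reachable.dist_triangle_right i
        _ ≤ d + 1 := by rw [dist_eq_one_iff_adj.mpr hadj]; exact Nat.add_le_add_right (ih _ _ rfl) 1
  obtain ⟨w, hw⟩ := (pathGraph_preconnected n i j).exists_walk_length_eq_dist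
  refine le_antisymm ?_ (hw ▸ w.natDist_le_length_pathGraph)
  rcases le_total (i : ℕ) j with h | h
  · exact hup _ i j (by simp only [Nat.dist]; omega)
  · rw [dist_comm]; exact hup _ j i (by simp only [Nat.dist]; omega)

end SimpleGraph

open SimpleGraph

lemma gridGraph_dist {m n : ℕ} (u v : Fin m × Fin n) :
    (gridGraph m n).dist u v = Nat.dist u.1 v.1 + Nat.dist u.2 v.2 := by
  rw [gridGraph, dist_boxProd (pathGraph_preconnected m) (pathGraph_preconnected n),
    pathGraph_dist, pathGraph_dist]

section GridTwoRows

/-- Label `4q + 2r + s` (with `r, s < 2`) goes to row `r`, column `q + s m`: consecutive labels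
alternate between columns `q` and `q + m`, or step from `(1, q + m)` to `(0, q + 1)`. -/
lemma gridGraph_two_hasDispersedLabelling (m : ℕ) :
    HasDispersedLabelling (gridGraph 2 (2 * m)) m := by
  have hcard : Fintype.card (Fin 2 × Fin (2 * m)) = 4 * m := by simp; ring
  let f : Fin (Fintype.card (Fin 2 × Fin (2 * m))) → Fin 2 × Fin (2 * m) := fun i =>
    (⟨(i : ℕ) % 4 / 2, by omega⟩,
      ⟨if (i : ℕ) % 2 = 0 then (i : ℕ) / 4 else (i : ℕ) / 4 + m,
        by have := i.isLt; split_ifs <;> omega⟩)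
  refine hasDispersedLabelling_of_injective f (fun i j hij => ?_) (fun i j hij => ?_)
  · simp only [f, Prod.ext_iff, Fin.ext_iff] at hij
    have := i.isLt; have := j.isLt
    ext; split_ifs at hij <;> omega
  · have := i.isLt
    simp only [gridGraph_dist, f, Nat.dist, hij]
    split_ifs <;> omega

variable {m : ℕ}

lemma gridGraph_two_subsingleton_far_of_central {a : Fin 2} {c : Fin (2 * m)}
    (hc : (c : ℕ) + 1 = m ∨ c = m) :
    {x | m + 1 ≤ (gridGraph 2 (2 * m)).dist (a, c) x}.Subsingleton := by
  intro x hx y hy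
  simp only [Set.mem_ofPred_eq, gridGraph_dist, Nat.dist] at hx hy
  have := a.isLt; have := x.1.isLt; have := x.2.isLt; have := y.1.isLt; have := y.2.isLt
  ext <;> omega

lemma gridGraph_two_not_hasDispersedLabelling (hm : 0 < m) :
    ¬ HasDispersedLabelling (gridGraph 2 (2 * m)) (m + 1) := by
  let c₁ : Fin (2 * m) := ⟨m - 1, by omega⟩
  let c₂ : Fin (2 * m) := ⟨m, by omega⟩
  refine not_hasDispersedLabelling_of_three (u := (0, c₁)) (v := (1, c₁)) (w := (0, c₂))
    (by simp) (by simp [c₁, c₂, Fin.ext_iff]; omega) (by simp)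
    (gridGraph_two_subsingleton_far_of_central ?_) (gridGraph_two_subsingleton_far_of_central ?_)
    (gridGraph_two_subsingleton_far_of_central ?_) <;> simp [c₁, c₂] <;> omega

lemma graphRadius_gridGraph_two (hm : 0 < m) : graphRadius (gridGraph 2 (2 * m)) = m + 1 := by
  refine graphRadius_eq (G := gridGraph 2 (2 * m)) ((0 : Fin 2), (⟨m - 1, by omega⟩ : Fin (2 * m)))
    (fun v => ?_) (eccent_le fun u => ?_)
  · have := v.1.isLt; have := v.2.isLt
    have h₀ := dist_le_eccent (G := gridGraph 2 (2 * m)) v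
      (⟨1 - v.1, by omega⟩, ⟨0, by omega⟩)
    have h₁ := dist_le_eccent (G := gridGraph 2 (2 * m)) v
      (⟨1 - v.1, by omega⟩, ⟨2 * m - 1, by omega⟩)
    simp only [gridGraph_dist, Nat.dist] at h₀ h₁
    omega
  · have := u.1.isLt; have := u.2.isLt
    simp only [gridGraph_dist, Nat.dist]
    omega

end GridTwoRows

theorem DL_grid_two_rows_even (n : ℕ) (hn : 4 ≤ n) (heven : Even n) :
    DL (gridGraph 2 n) = n / 2 ∧
      DL (gridGraph 2 n) = graphRadius (gridGraph 2 n) - 1 := by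
  obtain ⟨m, rfl⟩ := heven
  rw [← two_mul]
  have hm : 0 < m := by omega
  have hDL : DL (gridGraph 2 (2 * m)) = m :=
    DL_eq_of_hasDispersedLabelling (gridGraph_two_hasDispersedLabelling m)
      (gridGraph_two_not_hasDispersedLabelling hm)
  rw [hDL, graphRadius_gridGraph_two hm]
  omega
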